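/- For every prime p, fixed integers ε, a ≥ 1, b ≥ 0, and all integers n, k ≥ 0 with 2k < p, the sequence u(n) = ∑_{j=0}^n (-1)^{εj} C(n,j)^a C(2n,j)^b satisfies u(pn + k) ≡ u(n) u(k) (mod p). -/

import Mathlib

open Finset

def u (ε : ℤ) (a b : ℕ) (n : ℕ) : ℤ :=
  ∑ j ∈ Finset.range (n + 1),
    (((-1 : ℤˣ) ^ (ε * (j : ℤ)) : ℤˣ) : ℤ) * (n.choose j) ^ a * ((2 * n).choose j) ^ b

lemma aux_sum_range_mul {M : Type*} [AddCommMonoid M] (f : ℕ → M) (p m : ℕ) :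
    ∑ j ∈ range (p * m), f j = ∑ q ∈ range m, ∑ r ∈ range p, f (p * q + r) := by
  induction m with
  | zero => simp
  | succ m ih =>
      rw [Nat.mul_succ, Finset.sum_range_add, ih, Finset.sum_range_succ]

lemma aux_lucas (p : ℕ) [Fact p.Prime] (n k q r : ℕ) (hk : k < p) (hr : r < p) :
    ((Nat.choose (p * n + k) (p * q + r) : ℤ) : ZMod p)
      = ((Nat.choose n q : ℤ) : ZMod p) * ((Nat.choose k r : ℤ) : ZMod p) := by
  have h := Choose.choose_modEq_choose_mod_mul_choose_div (p := p)
    (n := p * n + k) (k := p * q + r)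
  rw [← ZMod.intCast_eq_intCast_iff] at h
  rw [Nat.mul_add_mod, Nat.mul_add_mod, Nat.mod_eq_of_lt hk, Nat.mod_eq_of_lt hr,
    Nat.mul_add_div (Fact.out : p.Prime).pos, Nat.mul_add_div (Fact.out : p.Prime).pos,
    Nat.div_eq_of_lt hk, Nat.div_eq_of_lt hr] at h
  push_cast at h ⊢
  rw [h]; ring_nf

theorem stmt_12 (p : ℕ) (hp : p.Prime) (ε : ℤ) (a b : ℕ) (ha : 1 ≤ a)
    (n k : ℕ) (hk : 2 * k < p) :
    u ε a b (p * n + k) ≡ u ε a b n * u ε a b k [ZMOD (p : ℤ)] := by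
  haveI : Fact p.Prime := ⟨hp⟩
  have hkp : k < p := by omega
  have h2kp : 2 * k < p := hk
  set sg : ℕ → ZMod p := fun j => ((((-1 : ℤˣ) ^ (ε * (j : ℤ)) : ℤˣ) : ℤ) : ZMod p) with hsg
  set T : ℕ → ℕ → ZMod p := fun m j =>
    sg j * ((m.choose j : ℤ) : ZMod p) ^ a * (((2 * m).choose j : ℤ) : ZMod p) ^ b with hT
  have hu : ∀ m : ℕ, ((u ε a b m : ℤ) : ZMod p) = ∑ j ∈ range (m + 1), T m j := by
    intro m
    simp only [u, hT, hsg, Int.cast_sum, Int.cast_mul, Int.cast_pow, Int.cast_natCast]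
  rw [← ZMod.intCast_eq_intCast_iff, Int.cast_mul, hu, hu, hu]
  have hsign : ∀ q r : ℕ, sg (p * q + r) = sg q * sg r := by
    intro q r
    simp only [hsg]
    push_cast
    have : ε * ((p : ℤ) * q + r) = (ε * q) * (p : ℤ) + ε * r := by ring
    rw [this, zpow_add, zpow_mul, zpow_natCast]
    push_cast [Units.val_mul]
    rw [ZMod.pow_card]
  have step1 : ∑ j ∈ range (p * n + k + 1), T (p * n + k) j
      = ∑ j ∈ range (p * (n + 1)), T (p * n + k) j := by
    apply Finset.sum_subset
    · intro x hx
      simp only [mem_range, Nat.mul_succ] at *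
      omega
    · intro x hx hx'
      simp only [mem_range, not_lt] at hx'
      have : (p * n + k).choose x = 0 := Nat.choose_eq_zero_of_lt (by omega)
      simp only [hT, this, Nat.cast_zero, Int.cast_zero, zero_pow (by omega : a ≠ 0),
        mul_zero, zero_mul]
  have step2 : ∀ q ∈ range (n + 1), ∀ r ∈ range p,
      T (p * n + k) (p * q + r) = T n q * T k r := by
    intro q _ r hr
    simp only [mem_range] at hr
    have h2 : 2 * (p * n + k) = p * (2 * n) + 2 * k := by ring
    simp only [hT, hsign, h2]
    rw [aux_lucas p n k q r hkp hr, aux_lucas p (2 * n) (2 * k) q r h2kp hr]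
    ring
  have step3 : ∑ r ∈ range p, T k r = ∑ r ∈ range (k + 1), T k r := by
    symm
    apply Finset.sum_subset
    · intro x hx; simp only [mem_range] at *; omega
    · intro x hx hx'
      simp only [mem_range, not_lt] at hx'
      have : k.choose x = 0 := Nat.choose_eq_zero_of_lt (by omega)
      simp only [hT, this, Nat.cast_zero, Int.cast_zero, zero_pow (by omega : a ≠ 0),
        mul_zero, zero_mul]
  calc ∑ j ∈ range (p * n + k + 1), T (p * n + k) j
      = ∑ j ∈ range (p * (n + 1)), T (p * n + k) j := step1
    _ = ∑ q ∈ range (n + 1), ∑ r ∈ range p, T (p * n + k) (p * q + r) :=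
        aux_sum_range_mul _ p (n + 1)
    _ = ∑ q ∈ range (n + 1), ∑ r ∈ range p, T n q * T k r := by
        exact Finset.sum_congr rfl fun q hq => Finset.sum_congr rfl fun r hr => step2 q hq r hr
    _ = (∑ q ∈ range (n + 1), T n q) * ∑ r ∈ range (k + 1), T k r := by
        rw [Finset.sum_congr rfl
          (fun q _ => by rw [← Finset.mul_sum, step3] :
            ∀ q ∈ range (n + 1),
              ∑ r ∈ range p, T n q * T k r = T n q * ∑ r ∈ range (k + 1), T k r),
          ← Finset.sum_mul]
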